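/- arXiv:0904.2871 — 4 statements merged into one kernel-verified Lean document; each statement's English description precedes it below -/
import Mathlib

section
/- For all z ∈ ℂ with |z| ≥ 1 and all x ∈ [0,t], writing X₁ = exp(|Im z|·(2t−x) + ‖q‖_t + ‖p‖_t + ∫ₓᵗ|p(τ)|dτ), one has: |z|·|φ̃(x,z)| ≤ X₁, |φ̃'(x,z)| ≤ X₁, |θ̃(x,z)| ≤ X₁, |θ̃'(x,z)| ≤ |z|·X₁, and moreover |θ̃(x,z) − θ(x,z)| ≤ X₁·‖q‖_t/|z| and |φ̃(x,z) − φ(x,z)| ≤ X₁·‖q‖_t/|z|². -/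
/-!
With `r = y' + i z y` and `w = y' - i z y`, an equation `y'' + z² y = F` becomes the pair of
first-order equations `r' = i z r + F`, `w' = -i z w + F`. Variation of constants bounds
`|r(x)| e^{-|Im z| x}` by `|r(a)| e^{-|Im z| a} + ∫ₐˣ |F| e^{-|Im z| s}`, and likewise for `w`.
Since `|z| ≥ 1`, both `|y|` and `|y'|` are at most `max (|r|, |w|)`, so a bound
`|F| ≤ |P| |y| + R` turns this into an integral inequality for `max (|r|, |w|) e^{-|Im z| x}`
with `L¹` coefficients, solved by Gronwall's lemma (proved through absolutely continuous
functions). This estimate is run forward on `[0, t]` for `θ, φ`, then backward from `t` for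
`θ̃, φ̃`, and backward again for `θ̃ - θ`, `φ̃ - φ`, which vanish at `t` and solve the
unperturbed equation with the source `q θ̃`, `q φ̃`.
-/

open MeasureTheory

noncomputable section

/-- `y` together with its x-derivative `y'` solves `-y'' + p·y = z²·y` on `ℝ`,
with `y'` locally absolutely continuous; this is encoded by requiring that `y'`
is everywhere the derivative of `y` and that `y'` is the integral of
`(p - z²)·y` (the equation holding a.e.). -/
def IsSol (p : ℝ → ℝ) (z : ℂ) (y y' : ℝ → ℂ) : Prop :=
  (∀ x : ℝ, HasDerivAt y (y' x) x) ∧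
  (∀ x : ℝ, y' x = y' 0 + ∫ s in (0:ℝ)..x, ((p s : ℂ) - z ^ 2) * y s)

open Set Filter Real
open scoped Complex

section AbsolutelyContinuous

variable {X Y E : Type*} [PseudoMetricSpace X] [PseudoMetricSpace Y]
  [NormedAddCommGroup E] [NormedSpace ℝ E] {a b : ℝ}

theorem AbsolutelyContinuousOnInterval.of_dist_le_mul {f : ℝ → X} {g : ℝ → Y} {K : ℝ}
    (hg : AbsolutelyContinuousOnInterval g a b)
    (hfg : ∀ x ∈ uIcc a b, ∀ y ∈ uIcc a b, dist (f x) (f y) ≤ K * dist (g x) (g y)) :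
    AbsolutelyContinuousOnInterval f a b := by
  unfold AbsolutelyContinuousOnInterval at *
  refine squeeze_zero' (Eventually.of_forall fun _ => Finset.sum_nonneg fun _ _ => dist_nonneg)
    ?_ (by simpa using hg.const_mul K)
  rw [eventually_inf_principal]
  filter_upwards with E hE
  rw [Finset.mul_sum]
  exact Finset.sum_le_sum fun i hi => hfg _ (hE.1 i hi).1 _ (hE.1 i hi).2

theorem ContDiff.comp_absolutelyContinuousOnInterval {φ : ℝ → E} {f : ℝ → ℝ}
    (hφ : ContDiff ℝ 1 φ) (hf : AbsolutelyContinuousOnInterval f a b) :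
    AbsolutelyContinuousOnInterval (fun x => φ (f x)) a b := by
  obtain ⟨C, hC⟩ := hf.exists_bound
  obtain ⟨K, hK⟩ := hφ.contDiffOn.exists_lipschitzOnWith one_ne_zero
    (convex_closedBall (0 : ℝ) C) (isCompact_closedBall 0 C)
  refine hf.of_dist_le_mul fun x hx y hy => hK.dist_le_mul _ ?_ _ ?_ <;>
    simpa using hC _ ‹_›

theorem IntervalIntegrable.absolutelyContinuousOnInterval_primitive {f : ℝ → E} {c : ℝ}
    (hf : IntervalIntegrable f volume a b) (hc : c ∈ uIcc a b) :
    AbsolutelyContinuousOnInterval (fun x => ∫ s in c..x, f s) a b := by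
  refine (hf.norm.absolutelyContinuousOnInterval_intervalIntegral hc).of_dist_le_mul
    (K := 1) fun x hx y hy => ?_
  have hint : ∀ u ∈ uIcc a b, IntervalIntegrable f volume c u := fun u hu =>
    hf.mono_set (uIcc_subset_uIcc hc hu)
  have hint' : ∀ u ∈ uIcc a b, IntervalIntegrable (fun s => ‖f s‖) volume c u := fun u hu =>
    (hint u hu).norm
  rw [one_mul, dist_eq_norm, Real.dist_eq, intervalIntegral.integral_interval_sub_left
    (hint x hx) (hint y hy), intervalIntegral.integral_interval_sub_left (hint' x hx) (hint' y hy)]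
  exact intervalIntegral.norm_integral_le_abs_integral_norm

theorem AbsolutelyContinuousOnInterval.le_of_ae_deriv_nonpos {f : ℝ → ℝ}
    (hf : AbsolutelyContinuousOnInterval f a b) (hab : a ≤ b)
    (hf' : ∀ᵐ x, x ∈ uIcc a b → deriv f x ≤ 0) : f b ≤ f a := by
  have hint : ∫ x in a..b, deriv f x ≤ 0 := by
    rw [intervalIntegral.integral_of_le hab]
    refine setIntegral_nonpos_ae measurableSet_Ioc ?_
    filter_upwards [hf'] with x hx hx'
    exact hx (Ioc_subset_Icc_self.trans Icc_subset_uIcc hx')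
  rw [hf.integral_deriv_eq_sub] at hint
  linarith

end AbsolutelyContinuous

theorem le_gronwall_of_le_integral {a b C : ℝ} {H g f : ℝ → ℝ} (hab : a ≤ b)
    (hH : ContinuousOn H (Icc a b)) (hg : IntervalIntegrable g volume a b)
    (hg0 : ∀ x ∈ Icc a b, 0 ≤ g x) (hf : IntervalIntegrable f volume a b)
    (hle : ∀ x ∈ Icc a b, H x ≤ C + ∫ s in a..x, (g s * H s + f s)) :
    ∀ x ∈ Icc a b,
      H x ≤ (C + ∫ s in a..x, f s * exp (-∫ σ in a..s, g σ)) *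
        exp (∫ σ in a..x, g σ) := by
  rw [← uIcc_of_le hab] at hH hg0 hle
  have ha : a ∈ uIcc a b := left_mem_uIcc
  set G := fun x => ∫ σ in a..x, g σ
  set R := fun x => C + ∫ s in a..x, (g s * H s + f s)
  have hEac : AbsolutelyContinuousOnInterval (fun x => exp (-G x)) a b :=
    contDiff_exp.comp_absolutelyContinuousOnInterval
      (hg.absolutelyContinuousOnInterval_intervalIntegral ha).neg
  have hk : IntervalIntegrable (fun s => g s * H s + f s) volume a b :=
    (hg.mul_continuousOn hH).add hf
  have hfE : IntervalIntegrable (fun s => f s * exp (-G s)) volume a b :=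
    hf.mul_continuousOn hEac.continuousOn
  -- `Φ' = g e^{-G} (H - R) ≤ 0`, so `Φ x ≤ Φ a = C`
  set Φ := fun x => exp (-G x) * R x - ∫ s in a..x, f s * exp (-G s)
  have hΦac : AbsolutelyContinuousOnInterval Φ a b :=
    (hEac.fun_mul ((hk.absolutelyContinuousOnInterval_intervalIntegral ha).of_dist_le_mul
      (K := 1) fun x _ y _ => by simp [R])).sub
      (hfE.absolutelyContinuousOnInterval_intervalIntegral ha)
  have hΦ' : ∀ᵐ x, x ∈ uIcc a b → deriv Φ x ≤ 0 := by
    filter_upwards [hg.ae_hasDerivAt_integral, hk.ae_hasDerivAt_integral,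
      hfE.ae_hasDerivAt_integral] with x hGx hRx hIx hx
    have hΦx : HasDerivAt Φ (exp (-G x) * g x * (H x - R x)) x :=
      ((((hGx hx a ha).neg.exp).mul ((hRx hx a ha).const_add C)).sub
        (hIx hx a ha)).congr_deriv (by simp only [Pi.neg_apply, G, R]; ring)
    rw [hΦx.deriv]
    exact mul_nonpos_of_nonneg_of_nonpos (mul_nonneg (exp_nonneg _) (hg0 x hx))
      (sub_nonpos.2 (hle x hx))
  intro x hx
  have hx' : x ∈ uIcc a b := uIcc_of_le hab ▸ hx
  have hΦx : Φ x ≤ C := by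
    simpa [Φ, G, R] using (hΦac.mono (uIcc_subset_uIcc ha hx')).le_of_ae_deriv_nonpos hx.1
      (hΦ'.mono fun u hu hu' => hu (uIcc_subset_uIcc ha hx' hu'))
  calc H x ≤ R x := hle x hx'
    _ = exp (-G x) * R x * exp (G x) := by rw [mul_right_comm, ← exp_add]; simp
    _ ≤ (C + ∫ s in a..x, f s * exp (-G s)) * exp (G x) := by
      gcongr; simp only [Φ] at hΦx; linarith

theorem cexp_neg_mul_eq_of_eq_integral {a b : ℝ} {α : ℂ} {r F : ℝ → ℂ} (hab : a ≤ b)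
    (hr : ContinuousOn r (Icc a b)) (hF : IntervalIntegrable F volume a b)
    (heq : ∀ x ∈ Icc a b, r x = r a + ∫ s in a..x, (α * r s + F s)) :
    ∀ x ∈ Icc a b,
      cexp (-α * x) * r x = cexp (-α * a) * r a + ∫ s in a..x, cexp (-α * s) * F s := by
  intro x hx
  rw [← uIcc_of_le hab] at hr heq hx
  have ha : a ∈ uIcc a b := left_mem_uIcc
  have hE : ContDiff ℝ 1 fun x : ℝ => cexp (-α * x) :=
    (contDiff_const.mul Complex.ofRealCLM.contDiff).cexp
  have hk : IntervalIntegrable (fun s => α * r s + F s) volume a b :=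
    (hr.intervalIntegrable.const_mul α).add hF
  have hEF : IntervalIntegrable (fun s => cexp (-α * s) * F s) volume a b :=
    hF.continuousOn_mul hE.continuous.continuousOn
  set g := fun x : ℝ => cexp (-α * x) * (r a + ∫ s in a..x, (α * r s + F s)) -
    ∫ s in a..x, cexp (-α * s) * F s
  have hgac : AbsolutelyContinuousOnInterval g a b := by
    refine AbsolutelyContinuousOnInterval.sub ?_ (hEF.absolutelyContinuousOnInterval_primitive ha)
    simp_rw [mul_add]
    exact (hE.contDiffOn.mul contDiffOn_const).absolutelyContinuousOnInterval.add
      (hE.contDiffOn.absolutelyContinuousOnInterval.fun_smul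
        (hk.absolutelyContinuousOnInterval_primitive ha))
  have hg' : ∀ᵐ x, x ∈ uIcc a b → HasDerivAt g 0 x := by
    filter_upwards [hk.ae_hasDerivAt_integral, hEF.ae_hasDerivAt_integral] with y hky hEFy hy
    have hEy : HasDerivAt (fun x : ℝ => cexp (-α * x)) (-α * cexp (-α * y)) y := by
      simpa [mul_comm] using ((hasDerivAt_id (y : ℂ)).const_mul (-α)).cexp.comp_ofReal
    refine ((hEy.mul ((hky hy a ha).const_add (r a))).sub (hEFy hy a ha)).congr_deriv ?_
    rw [← heq y hy]
    ring
  obtain ⟨C, hC⟩ := hgac.const_of_ae_hasDerivAt_zero hg'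
  have hgx := (hC x hx).trans (hC a ha).symm
  simp only [g, ← heq x hx, intervalIntegral.integral_same, add_zero, sub_zero] at hgx
  rw [← hgx]
  ring

theorem norm_mul_exp_le_of_eq_integral {a b μ : ℝ} {α : ℂ} {r F : ℝ → ℂ} (hab : a ≤ b)
    (hμ : α.re ≤ μ) (hr : ContinuousOn r (Icc a b)) (hF : IntervalIntegrable F volume a b)
    (heq : ∀ x ∈ Icc a b, r x = r a + ∫ s in a..x, (α * r s + F s)) :
    ∀ x ∈ Icc a b, ‖r x‖ * exp (-μ * x) ≤
      ‖r a‖ * exp (-μ * a) + ∫ s in a..x, ‖F s‖ * exp (-μ * s) := by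
  intro x hx
  have hFx : IntervalIntegrable F volume a x :=
    hF.mono_set (uIcc_subset_uIcc left_mem_uIcc (Icc_subset_uIcc hx))
  have hnorm (u : ℝ) : ‖cexp (-α * u)‖ = exp (-α.re * u) := by simp [Complex.norm_exp]
  have hweight {s : ℝ} (hs : s ≤ x) :
      exp ((α.re - μ) * x) * exp (-α.re * s) ≤ exp (-μ * s) := by
    rw [← exp_add]; gcongr; nlinarith
  calc ‖r x‖ * exp (-μ * x) = exp ((α.re - μ) * x) * ‖cexp (-α * x) * r x‖ := by
        rw [norm_mul, hnorm, ← mul_assoc, ← exp_add]; ring_nf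
    _ ≤ exp ((α.re - μ) * x) *
          (exp (-α.re * a) * ‖r a‖ + ∫ s in a..x, exp (-α.re * s) * ‖F s‖) := by
        rw [cexp_neg_mul_eq_of_eq_integral hab hr hF heq x hx]
        gcongr
        refine (norm_add_le _ _).trans (add_le_add (by rw [norm_mul, hnorm]) ?_)
        refine (intervalIntegral.norm_integral_le_integral_norm hx.1).trans_eq ?_
        simp only [norm_mul, hnorm]
    _ ≤ ‖r a‖ * exp (-μ * a) + ∫ s in a..x, ‖F s‖ * exp (-μ * s) := by
        rw [mul_add, ← mul_assoc, ← intervalIntegral.integral_const_mul]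
        refine add_le_add (by rw [mul_comm]; gcongr; exact hweight hx.1) ?_
        refine intervalIntegral.integral_mono_on hx.1 ?_ ?_ fun s hs => ?_
        · exact (hFx.norm.continuousOn_mul (by fun_prop)).const_mul _
        · exact hFx.norm.mul_continuousOn (by fun_prop)
        · rw [← mul_assoc, mul_comm]; gcongr; exact hweight hs.2

def zNorm (z y y' : ℂ) : ℝ := max ‖y' + Complex.I * z * y‖ ‖y' - Complex.I * z * y‖

@[simp]
theorem zNorm_zero (z : ℂ) : zNorm z 0 0 = 0 := by
  simp [zNorm]

theorem zNorm_nonneg (z y y' : ℂ) : 0 ≤ zNorm z y y' :=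
  (norm_nonneg _).trans (le_max_left _ _)

theorem norm_mul_le_zNorm (z y y' : ℂ) : ‖z‖ * ‖y‖ ≤ zNorm z y y' := by
  have h := norm_sub_le (y' + Complex.I * z * y) (y' - Complex.I * z * y)
  rw [show y' + Complex.I * z * y - (y' - Complex.I * z * y) = 2 * Complex.I * z * y by ring] at h
  simp only [norm_mul, Complex.norm_I, Complex.norm_two] at h
  unfold zNorm
  linarith [le_max_left ‖y' + Complex.I * z * y‖ ‖y' - Complex.I * z * y‖,
    le_max_right ‖y' + Complex.I * z * y‖ ‖y' - Complex.I * z * y‖]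

theorem norm_le_zNorm (z y y' : ℂ) : ‖y'‖ ≤ zNorm z y y' := by
  have h := norm_add_le (y' + Complex.I * z * y) (y' - Complex.I * z * y)
  rw [show y' + Complex.I * z * y + (y' - Complex.I * z * y) = 2 * y' by ring] at h
  simp only [norm_mul, Complex.norm_two] at h
  unfold zNorm
  linarith [le_max_left ‖y' + Complex.I * z * y‖ ‖y' - Complex.I * z * y‖,
    le_max_right ‖y' + Complex.I * z * y‖ ‖y' - Complex.I * z * y‖]

theorem zNorm_neg (z y y' : ℂ) : zNorm z y (-y') = zNorm z y y' := by
  rw [zNorm, zNorm, max_comm, ← norm_neg (-y' + _), ← norm_neg (-y' - _)]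
  ring_nf

section Apriori

variable {a b : ℝ} {z : ℂ} {y yD F : ℝ → ℂ}

theorem norm_add_I_mul_mul_exp_le (hab : a ≤ b) (hy : ∀ x ∈ Icc a b, HasDerivAt y (yD x) x)
    (hyDc : ContinuousOn yD (Icc a b)) (hF : IntervalIntegrable F volume a b)
    (heq : ∀ x ∈ Icc a b, yD x = yD a + ∫ s in a..x, (F s - z ^ 2 * y s)) :
    ∀ x ∈ Icc a b, ‖yD x + Complex.I * z * y x‖ * exp (-|z.im| * x) ≤
      ‖yD a + Complex.I * z * y a‖ * exp (-|z.im| * a) +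
        ∫ s in a..x, ‖F s‖ * exp (-|z.im| * s) := by
  have hyc : ContinuousOn y (Icc a b) := fun x hx => (hy x hx).continuousAt.continuousWithinAt
  have hk : IntervalIntegrable (fun s => F s - z ^ 2 * y s) volume a b :=
    hF.sub ((hyc.intervalIntegrable_of_Icc hab).const_mul _)
  refine norm_mul_exp_le_of_eq_integral (α := Complex.I * z) hab (by simpa using neg_le_abs z.im)
    (hyDc.add (continuousOn_const.mul hyc)) hF fun x hx => ?_
  have hax : uIcc a x ⊆ Icc a b := uIcc_subset_Icc (left_mem_Icc.2 hab) hx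
  have hyDx : IntervalIntegrable yD volume a x := (hyDc.mono hax).intervalIntegrable
  have hkx : IntervalIntegrable (fun s => F s - z ^ 2 * y s) volume a x :=
    hk.mono_set (uIcc_subset_uIcc left_mem_uIcc (Icc_subset_uIcc hx))
  have hyx : y x = y a + ∫ s in a..x, yD s := by
    rw [intervalIntegral.integral_eq_sub_of_hasDerivAt (fun u hu => hy u (hax hu)) hyDx]; ring
  have hint : Complex.I * z * (∫ s in a..x, yD s) + ∫ s in a..x, (F s - z ^ 2 * y s) =
      ∫ s in a..x, (Complex.I * z * (yD s + Complex.I * z * y s) + F s) := by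
    rw [← intervalIntegral.integral_const_mul,
      ← intervalIntegral.integral_add (hyDx.const_mul _) hkx]
    congr 1 with s
    linear_combination (-z ^ 2 * y s) * Complex.I_sq
  rw [← hint, heq x hx, hyx]
  ring

theorem zNorm_mul_exp_le_forward (hab : a ≤ b) (hz : 1 ≤ ‖z‖)
    (hy : ∀ x ∈ Icc a b, HasDerivAt y (yD x) x) (hF : IntervalIntegrable F volume a b)
    (heq : ∀ x ∈ Icc a b, yD x = yD a + ∫ s in a..x, (F s - z ^ 2 * y s))
    {g R : ℝ → ℝ} (hg : IntervalIntegrable g volume a b) (hg0 : ∀ x ∈ Icc a b, 0 ≤ g x)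
    (hR : IntervalIntegrable R volume a b)
    (hFle : ∀ x ∈ Icc a b, ‖F x‖ ≤ g x * ‖y x‖ + R x) :
    ∀ x ∈ Icc a b, zNorm z (y x) (yD x) * exp (-|z.im| * x) ≤
      (zNorm z (y a) (yD a) * exp (-|z.im| * a) +
        ∫ s in a..x, R s * exp (-|z.im| * s) * exp (-∫ σ in a..s, g σ)) *
      exp (∫ σ in a..x, g σ) := by
  have hyc : ContinuousOn y (Icc a b) := fun x hx => (hy x hx).continuousAt.continuousWithinAt
  have hk : IntervalIntegrable (fun s => F s - z ^ 2 * y s) volume a b :=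
    hF.sub ((hyc.intervalIntegrable_of_Icc hab).const_mul _)
  have hyDc : ContinuousOn yD (Icc a b) := by
    refine (continuousOn_const.add ?_).congr heq
    simpa [uIcc_of_le hab] using intervalIntegral.continuousOn_primitive_interval' hk left_mem_uIcc
  set μ := |z.im|
  set H := fun x => zNorm z (y x) (yD x) * exp (-μ * x)
  have hHc : ContinuousOn H (Icc a b) := by unfold H zNorm; fun_prop
  have hRe : IntervalIntegrable (fun s => R s * exp (-μ * s)) volume a b :=
    hR.mul_continuousOn (by fun_prop)
  have hr := norm_add_I_mul_mul_exp_le hab hy hyDc hF heq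
  have hw := norm_add_I_mul_mul_exp_le (z := -z) hab hy hyDc hF (by simpa using heq)
  have hneg (u v : ℂ) : u + Complex.I * -z * v = u - Complex.I * z * v := by ring
  simp only [hneg, Complex.neg_im, abs_neg] at hw
  refine le_gronwall_of_le_integral hab hHc hg hg0 hRe fun x hx => ?_
  have hax : Icc a x ⊆ Icc a b := Icc_subset_Icc le_rfl hx.2
  have hsub : uIcc a x ⊆ uIcc a b := uIcc_subset_uIcc left_mem_uIcc (Icc_subset_uIcc hx)
  have hFH :
      ∫ s in a..x, ‖F s‖ * exp (-μ * s) ≤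
        ∫ s in a..x, (g s * H s + R s * exp (-μ * s)) := by
    refine intervalIntegral.integral_mono_on hx.1 ?_ ?_ fun s hs => ?_
    · exact (hF.mono_set hsub).norm.mul_continuousOn (by fun_prop)
    · exact ((hg.mul_continuousOn (uIcc_of_le hab ▸ hHc)).add hRe).mono_set hsub
    · have hys : ‖y s‖ ≤ zNorm z (y s) (yD s) :=
        (le_mul_of_one_le_left (norm_nonneg _) hz).trans (norm_mul_le_zNorm _ _ _)
      calc ‖F s‖ * exp (-μ * s) ≤ (g s * zNorm z (y s) (yD s) + R s) * exp (-μ * s) := by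
            gcongr
            exact (hFle s (hax hs)).trans (by gcongr; exact hg0 s (hax hs))
        _ = g s * H s + R s * exp (-μ * s) := by ring
  refine (max_mul_of_nonneg _ _ (exp_nonneg _)).le.trans (max_le ?_ ?_)
  · exact (hr x hx).trans
      (add_le_add (mul_le_mul_of_nonneg_right (le_max_left _ _) (exp_nonneg _)) hFH)
  · exact (hw x hx).trans
      (add_le_add (mul_le_mul_of_nonneg_right (le_max_right _ _) (exp_nonneg _)) hFH)

theorem zNorm_mul_exp_le_backward (hab : a ≤ b) (hz : 1 ≤ ‖z‖)
    (hy : ∀ x ∈ Icc a b, HasDerivAt y (yD x) x) (hF : IntervalIntegrable F volume a b)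
    (heq : ∀ x ∈ Icc a b, yD x = yD b + ∫ s in b..x, (F s - z ^ 2 * y s))
    {g R : ℝ → ℝ} (hg : IntervalIntegrable g volume a b) (hg0 : ∀ x ∈ Icc a b, 0 ≤ g x)
    (hR : IntervalIntegrable R volume a b)
    (hFle : ∀ x ∈ Icc a b, ‖F x‖ ≤ g x * ‖y x‖ + R x) :
    ∀ x ∈ Icc a b, zNorm z (y x) (yD x) * exp (|z.im| * x) ≤
      (zNorm z (y b) (yD b) * exp (|z.im| * b) +
        ∫ s in x..b, R s * exp (|z.im| * s) * exp (-∫ σ in s..b, g σ)) *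
      exp (∫ σ in x..b, g σ) := by
  have hmem {u : ℝ} (hu : u ∈ Icc (-b) (-a)) : -u ∈ Icc a b :=
    ⟨le_neg.1 hu.2, neg_le.1 hu.1⟩
  have hneg {f : ℝ → ℝ} (hf : IntervalIntegrable f volume a b) :
      IntervalIntegrable (fun u => f (-u)) volume (-b) (-a) :=
    ((IntervalIntegrable.iff_comp_neg (by simp)).1 hf).symm
  have hint_neg (f : ℝ → ℝ) (u : ℝ) : ∫ s in -b..u, f (-s) = ∫ s in -u..b, f s := by
    simp [intervalIntegral.integral_comp_neg]
  intro x hx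
  have key := zNorm_mul_exp_le_forward (y := fun u => y (-u)) (yD := fun u => -yD (-u))
    (F := fun u => F (-u)) (neg_le_neg hab) hz
    (fun u hu => by simpa [Function.comp_def] using (hy (-u) (hmem hu)).scomp u (hasDerivAt_neg u))
    ((IntervalIntegrable.iff_comp_neg (by simp)).1 hF).symm
    (fun u hu => by
      rw [heq (-u) (hmem hu), intervalIntegral.integral_comp_neg (fun s => F s - z ^ 2 * y s),
        intervalIntegral.integral_symm (-u)]
      simp only [neg_neg]
      ring)
    (hneg hg) (fun u hu => hg0 _ (hmem hu)) (hneg hR) (fun u hu => by simpa using hFle _ (hmem hu))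
    (-x) ⟨neg_le_neg hx.2, neg_le_neg hx.1⟩
  have hout := intervalIntegral.integral_comp_neg (a := -b) (b := -x)
    fun v => R v * exp (|z.im| * v) * exp (-∫ σ in v..b, g σ)
  simp only [neg_neg, neg_mul, mul_neg, zNorm_neg, hint_neg] at hout key
  rwa [hout] at key

theorem zNorm_le_backward_of_zNorm_eq_zero (hab : a ≤ b) (hz : 1 ≤ ‖z‖)
    (hy : ∀ x ∈ Icc a b, HasDerivAt y (yD x) x) (hF : IntervalIntegrable F volume a b)
    (heq : ∀ x ∈ Icc a b, yD x = yD b + ∫ s in b..x, (F s - z ^ 2 * y s))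
    {g ρ : ℝ → ℝ} (hg : IntervalIntegrable g volume a b) (hg0 : ∀ x ∈ Icc a b, 0 ≤ g x)
    (hρ : IntervalIntegrable ρ volume a b) (M : ℝ) (hb : zNorm z (y b) (yD b) = 0)
    (hFle : ∀ x ∈ Icc a b,
      ‖F x‖ ≤ g x * ‖y x‖ + M * ρ x * exp (-|z.im| * x + ∫ σ in x..b, g σ)) :
    ∀ x ∈ Icc a b, zNorm z (y x) (yD x) ≤
      M * (∫ s in x..b, ρ s) * exp (-|z.im| * x + ∫ σ in x..b, g σ) := by
  intro x hx
  have hE : ContinuousOn (fun s => exp (-|z.im| * s + ∫ σ in s..b, g σ)) (uIcc a b) :=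
    ((continuousOn_const.mul continuousOn_id).add
      (intervalIntegral.continuousOn_primitive_interval_left
        ((intervalIntegrable_iff' (by simp)).1 hg))).rexp
  have key := zNorm_mul_exp_le_backward hab hz hy hF heq hg hg0
    ((hρ.const_mul M).mul_continuousOn hE) hFle x hx
  -- the factor in `hFle` cancels the weight `e^{|Im z| s - ∫ₛᵇ g}` of the backward estimate
  have hcancel (s : ℝ) : M * ρ s * exp (-|z.im| * s + ∫ σ in s..b, g σ) * exp (|z.im| * s) *
      exp (-∫ σ in s..b, g σ) = M * ρ s := by
    rw [mul_assoc, mul_assoc, ← exp_add, ← exp_add]; ring_nf; simp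
  simp only [hb, zero_mul, zero_add, hcancel, intervalIntegral.integral_const_mul] at key
  calc zNorm z (y x) (yD x)
      = zNorm z (y x) (yD x) * exp (|z.im| * x) * exp (-|z.im| * x) := by
        rw [mul_assoc, ← exp_add]; simp
    _ ≤ M * (∫ s in x..b, ρ s) * exp (∫ σ in x..b, g σ) * exp (-|z.im| * x) := by gcongr
    _ = M * (∫ s in x..b, ρ s) * exp (-|z.im| * x + ∫ σ in x..b, g σ) := by
        rw [mul_assoc _ (exp _), ← exp_add, add_comm]

end Apriori

theorem intervalIntegrable_of_ae_periodic {p : ℝ → ℝ} (hper : ∀ᵐ x, p (x + 1) = p x)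
    (hpint : IntegrableOn p (Icc 0 1)) {t : ℝ} (ht : 0 ≤ t) :
    IntervalIntegrable p volume 0 t := by
  have hshift : ∀ᵐ x, p (x - 1) = p x := by
    filter_upwards [(measurePreserving_sub_right volume (1 : ℝ)).quasiMeasurePreserving.ae hper]
      with x hx
    simpa using hx.symm
  have hstep (n : ℕ) : IntervalIntegrable p volume n (n + 1) := by
    induction n with
    | zero => simpa using (intervalIntegrable_iff_integrableOn_Icc_of_le zero_le_one).2 hpint
    | succ n ih =>
      push_cast
      exact (ih.comp_sub_right 1).congr_ae (ae_restrict_of_ae hshift)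
  have hN : IntervalIntegrable p volume 0 ⌈t⌉₊ := by
    simpa using IntervalIntegrable.trans_iterate (a := fun k : ℕ => (k : ℝ)) fun k _ => by
      simpa using hstep k
  exact hN.mono_set (uIcc_subset_uIcc left_mem_uIcc (by simp [ht, Nat.le_ceil]))

theorem IntervalIntegrable.ofReal_mul {P : ℝ → ℝ} {y : ℝ → ℂ} {a b : ℝ}
    (hP : IntervalIntegrable P volume a b) (hy : Continuous y) :
    IntervalIntegrable (fun s => (P s : ℂ) * y s) volume a b :=
  IntervalIntegrable.mul_continuousOn ⟨hP.1.ofReal, hP.2.ofReal⟩ hy.continuousOn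

section IsSol

variable {P : ℝ → ℝ} {z : ℂ} {y yD : ℝ → ℂ}

theorem IsSol.continuous (h : IsSol P z y yD) : Continuous y :=
  continuous_iff_continuousAt.2 fun x => (h.1 x).continuousAt

theorem IsSol.intervalIntegrable (h : IsSol P z y yD) {a b : ℝ}
    (hP : IntervalIntegrable P volume a b) :
    IntervalIntegrable (fun s => (P s : ℂ) * y s - z ^ 2 * y s) volume a b :=
  (hP.ofReal_mul h.continuous).sub
    (intervalIntegrable_const.mul_continuousOn h.continuous.continuousOn)

theorem IsSol.eq_add_integral (h : IsSol P z y yD) {t : ℝ}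
    (hP : IntervalIntegrable P volume 0 t) {c x : ℝ} (hc : c ∈ Icc 0 t) (hx : x ∈ Icc 0 t) :
    yD x = yD c + ∫ s in c..x, ((P s : ℂ) * y s - z ^ 2 * y s) := by
  have hsub {u : ℝ} (hu : u ∈ Icc 0 t) : uIcc 0 u ⊆ uIcc 0 t :=
    uIcc_subset_uIcc left_mem_uIcc (Icc_subset_uIcc hu)
  have hk : IntervalIntegrable (fun s => ((P s : ℂ) - z ^ 2) * y s) volume 0 t := by
    simpa only [sub_mul] using h.intervalIntegrable hP
  simp_rw [← sub_mul]
  rw [h.2 x, h.2 c, ← intervalIntegral.integral_interval_sub_left (hk.mono_set (hsub hx))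
    (hk.mono_set (hsub hc))]
  ring

theorem IsSol.zNorm_le_forward (h : IsSol P z y yD) (hz : 1 ≤ ‖z‖) {t : ℝ} (ht : 0 ≤ t)
    (hP : IntervalIntegrable P volume 0 t) :
    zNorm z (y t) (yD t) ≤
      zNorm z (y 0) (yD 0) * exp (|z.im| * t + ∫ s in (0:ℝ)..t, |P s|) := by
  have key := zNorm_mul_exp_le_forward ht hz (fun s _ => h.1 s) (hP.ofReal_mul h.continuous)
    (fun s hs => by simpa using h.eq_add_integral hP (left_mem_Icc.2 ht) hs) hP.abs
    (fun _ _ => abs_nonneg _) (intervalIntegrable_const (c := 0)) (fun s _ => by simp)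
    t (right_mem_Icc.2 ht)
  simp only [zero_mul, intervalIntegral.integral_zero, add_zero, mul_zero, exp_zero,
    mul_one] at key
  calc zNorm z (y t) (yD t) = zNorm z (y t) (yD t) * exp (-|z.im| * t) * exp (|z.im| * t) := by
        rw [mul_assoc, ← exp_add]; simp
    _ ≤ zNorm z (y 0) (yD 0) * exp (∫ s in (0:ℝ)..t, |P s|) * exp (|z.im| * t) := by gcongr
    _ = _ := by rw [mul_assoc, ← exp_add, add_comm]

theorem IsSol.zNorm_le_backward (h : IsSol P z y yD) (hz : 1 ≤ ‖z‖) {t : ℝ}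
    (hP : IntervalIntegrable P volume 0 t) {x : ℝ} (hx : x ∈ Icc 0 t) :
    zNorm z (y x) (yD x) ≤
      zNorm z (y t) (yD t) * exp (|z.im| * (t - x) + ∫ s in x..t, |P s|) := by
  have ht : 0 ≤ t := hx.1.trans hx.2
  have key := zNorm_mul_exp_le_backward ht hz (fun s _ => h.1 s) (hP.ofReal_mul h.continuous)
    (fun s hs => by simpa using h.eq_add_integral hP (right_mem_Icc.2 ht) hs) hP.abs
    (fun _ _ => abs_nonneg _) (intervalIntegrable_const (c := 0)) (fun s _ => by simp) x hx
  simp only [zero_mul, intervalIntegral.integral_zero, add_zero] at key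
  calc zNorm z (y x) (yD x) = zNorm z (y x) (yD x) * exp (|z.im| * x) * exp (-|z.im| * x) := by
        rw [mul_assoc, ← exp_add]; simp
    _ ≤ zNorm z (y t) (yD t) * exp (|z.im| * t) * exp (∫ s in x..t, |P s|) *
          exp (-|z.im| * x) := by gcongr
    _ = _ := by simp only [mul_assoc, ← exp_add]; ring_nf

end IsSol

section Perturbation

variable {p q : ℝ → ℝ} {t : ℝ} {z : ℂ}

-- `X₁` of the theorem, as a function of `x`
def growthBound (p q : ℝ → ℝ) (t : ℝ) (z : ℂ) (x : ℝ) : ℝ :=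
  Real.exp (|z.im| * (2 * t - x) + (∫ s in (0:ℝ)..t, |q s|) + (∫ s in (0:ℝ)..t, |p s|)
    + ∫ τ in x..t, |p τ|)

theorem growthBound_eq (x : ℝ) : growthBound p q t z x =
    exp (2 * |z.im| * t + (∫ s in (0:ℝ)..t, |q s|) + ∫ s in (0:ℝ)..t, |p s|) *
      exp (-|z.im| * x + ∫ σ in x..t, |p σ|) := by
  rw [growthBound, ← exp_add]; ring_nf

theorem zNorm_le_mul_growthBound (hz : 1 ≤ ‖z‖) (hp : IntervalIntegrable p volume 0 t)
    (hq : IntervalIntegrable q volume 0 t) {y yD w w' : ℝ → ℂ} (hy : IsSol p z y yD)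
    (hw : IsSol (fun x => p x + q x) z w w') (hmatch : w t = y t ∧ w' t = yD t) {x : ℝ}
    (hx : x ∈ Icc 0 t) :
    zNorm z (w x) (w' x) ≤ zNorm z (y 0) (yD 0) * growthBound p q t z x := by
  have ht : 0 ≤ t := hx.1.trans hx.2
  have hsub : uIcc x t ⊆ uIcc 0 t := uIcc_subset_uIcc (Icc_subset_uIcc hx) right_mem_uIcc
  have hpq : IntervalIntegrable (fun s => p s + q s) volume 0 t := hp.add hq
  have hS : ∫ σ in x..t, |p σ + q σ| ≤
      (∫ σ in x..t, |p σ|) + ∫ σ in (0:ℝ)..t, |q σ| := by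
    calc ∫ σ in x..t, |p σ + q σ| ≤ ∫ σ in x..t, (|p σ| + |q σ|) :=
          intervalIntegral.integral_mono_on hx.2 (hpq.abs.mono_set hsub)
            ((hp.abs.add hq.abs).mono_set hsub) fun σ _ => abs_add_le _ _
      _ ≤ (∫ σ in x..t, |p σ|) + ∫ σ in (0:ℝ)..t, |q σ| := by
          rw [intervalIntegral.integral_add (hp.abs.mono_set hsub) (hq.abs.mono_set hsub)]
          gcongr
          exact intervalIntegral.integral_mono_interval hx.1 hx.2 le_rfl
            (ae_of_all _ fun _ => abs_nonneg _) hq.abs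
  calc zNorm z (w x) (w' x)
      ≤ zNorm z (w t) (w' t) * exp (|z.im| * (t - x) + ∫ σ in x..t, |p σ + q σ|) :=
        hw.zNorm_le_backward hz hpq hx
    _ ≤ zNorm z (y 0) (yD 0) * exp (|z.im| * t + ∫ σ in (0:ℝ)..t, |p σ|) *
          exp (|z.im| * (t - x) + ∫ σ in x..t, |p σ + q σ|) := by
        rw [hmatch.1, hmatch.2]
        gcongr
        exact hy.zNorm_le_forward hz ht hp
    _ ≤ zNorm z (y 0) (yD 0) * growthBound p q t z x := by
        rw [mul_assoc, ← exp_add, growthBound]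
        gcongr ?_ * exp ?_
        · exact zNorm_nonneg _ _ _
        · linarith

theorem IsSol.sub_eq_add_integral {v vD v₀ v₀D : ℝ → ℂ}
    (hv : IsSol (fun x => p x + q x) z v vD) (hv₀ : IsSol p z v₀ v₀D)
    (hp : IntervalIntegrable p volume 0 t) (hq : IntervalIntegrable q volume 0 t) {x : ℝ}
    (hx : x ∈ Icc 0 t) :
    vD x - v₀D x = (vD t - v₀D t) +
      ∫ u in t..x, (((p u : ℂ) * (v u - v₀ u) + q u * v u) - z ^ 2 * (v u - v₀ u)) := by
  have htt : t ∈ Icc 0 t := right_mem_Icc.2 (hx.1.trans hx.2)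
  have hsub : uIcc t x ⊆ uIcc 0 t := uIcc_subset_uIcc right_mem_uIcc (Icc_subset_uIcc hx)
  rw [hv.eq_add_integral (hp.add hq) htt hx, hv₀.eq_add_integral hp htt hx, add_sub_add_comm,
    ← intervalIntegral.integral_sub ((hv.intervalIntegrable (hp.add hq)).mono_set hsub)
      ((hv₀.intervalIntegrable hp).mono_set hsub)]
  congr 2 with u
  push_cast
  ring

theorem sq_norm_mul_norm_sub_le_growthBound (hz : 1 ≤ ‖z‖)
    (hp : IntervalIntegrable p volume 0 t) (hq : IntervalIntegrable q volume 0 t)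
    {v vD v₀ v₀D : ℝ → ℂ} (hv : IsSol (fun x => p x + q x) z v vD)
    (hv₀ : IsSol p z v₀ v₀D) (hmatch : v t = v₀ t ∧ vD t = v₀D t) {c : ℝ}
    (hvb : ∀ s ∈ Icc 0 t, ‖z‖ * ‖v s‖ ≤ c * growthBound p q t z s) {x : ℝ}
    (hx : x ∈ Icc 0 t) :
    ‖z‖ ^ 2 * ‖v x - v₀ x‖ ≤
      c * (∫ s in (0:ℝ)..t, |q s|) * growthBound p q t z x := by
  have ht : 0 ≤ t := hx.1.trans hx.2
  have hz0 : 0 < ‖z‖ := one_pos.trans_le hz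
  have hc : 0 ≤ c := nonneg_of_mul_nonneg_left
    ((by positivity : (0:ℝ) ≤ ‖z‖ * ‖v t‖).trans (hvb t (right_mem_Icc.2 ht)))
    (exp_pos _)
  set K := exp (2 * |z.im| * t + (∫ s in (0:ℝ)..t, |q s|) + ∫ s in (0:ℝ)..t, |p s|)
  -- `v - v₀` solves the unperturbed equation with source `q v`, of size `|q| ‖z‖⁻¹ c X₁`
  have hsrc (s : ℝ) (hs : s ∈ Icc 0 t) : ‖(p s : ℂ) * (v s - v₀ s) + q s * v s‖ ≤
      |p s| * ‖v s - v₀ s‖ +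
        ‖z‖⁻¹ * c * K * |q s| * exp (-|z.im| * s + ∫ σ in s..t, |p σ|) := by
    refine (norm_add_le _ _).trans (add_le_add (by simp) ?_)
    calc ‖(q s : ℂ) * v s‖ = |q s| * ‖v s‖ := by simp
      _ ≤ |q s| * (‖z‖⁻¹ * (c * growthBound p q t z s)) := by
          gcongr
          rw [le_inv_mul_iff₀ hz0]
          exact hvb s hs
      _ = _ := by rw [growthBound_eq]; ring
  have key := zNorm_le_backward_of_zNorm_eq_zero ht hz (fun s _ => (hv.1 s).sub (hv₀.1 s))
    ((hp.ofReal_mul (hv.continuous.sub hv₀.continuous)).add (hq.ofReal_mul hv.continuous))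
    (fun s hs => hv.sub_eq_add_integral hv₀ hp hq hs) hp.abs (fun _ _ => abs_nonneg _) hq.abs
    (‖z‖⁻¹ * c * K) (by simp [hmatch]) hsrc x hx
  calc ‖z‖ ^ 2 * ‖v x - v₀ x‖ = ‖z‖ * (‖z‖ * ‖v x - v₀ x‖) := by ring
    _ ≤ ‖z‖ * (‖z‖⁻¹ * c * K * (∫ s in x..t, |q s|) *
          exp (-|z.im| * x + ∫ σ in x..t, |p σ|)) := by
        gcongr ‖z‖ * ?_
        exact (norm_mul_le_zNorm _ _ _).trans key
    _ = c * (∫ s in x..t, |q s|) * (K * exp (-|z.im| * x + ∫ σ in x..t, |p σ|)) := by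
        field_simp
    _ ≤ c * (∫ s in (0:ℝ)..t, |q s|) * growthBound p q t z x := by
        rw [growthBound_eq]
        gcongr
        exact intervalIntegral.integral_mono_interval hx.1 hx.2 le_rfl
          (ae_of_all _ fun _ => abs_nonneg _) hq.abs

end Perturbation

theorem statement_3_general
    (p q : ℝ → ℝ) (t : ℝ)
    (hper : ∀ᵐ x ∂(volume : Measure ℝ), p (x + 1) = p x)
    (hpint : IntegrableOn p (Set.Icc 0 1))
    (hq : Integrable q)
    (θ φ θD φD : ℂ → ℝ → ℂ)
    (hθ : ∀ z : ℂ, IsSol p z (θ z) (θD z))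
    (hθ0 : ∀ z : ℂ, θ z 0 = 1) (hθD0 : ∀ z : ℂ, θD z 0 = 0)
    (hφ : ∀ z : ℂ, IsSol p z (φ z) (φD z))
    (hφ0 : ∀ z : ℂ, φ z 0 = 0) (hφD0 : ∀ z : ℂ, φD z 0 = 1)
    (θt φt θtD φtD : ℂ → ℝ → ℂ)
    (hθt : ∀ z : ℂ, IsSol (fun x => p x + q x) z (θt z) (θtD z))
    (hφt : ∀ z : ℂ, IsSol (fun x => p x + q x) z (φt z) (φtD z))
    (hθmatch : ∀ z : ℂ, ∀ x : ℝ, t ≤ x → θt z x = θ z x ∧ θtD z x = θD z x)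
    (hφmatch : ∀ z : ℂ, ∀ x : ℝ, t ≤ x → φt z x = φ z x ∧ φtD z x = φD z x) :
    ∀ z : ℂ, 1 ≤ ‖z‖ → ∀ x ∈ Set.Icc (0:ℝ) t, ∀ X₁ normQ : ℝ,
      normQ = (∫ s in (0:ℝ)..t, |q s|) →
      X₁ = Real.exp (|z.im| * (2 * t - x) + normQ + (∫ s in (0:ℝ)..t, |p s|)
              + ∫ τ in x..t, |p τ|) →
      ‖z‖ * ‖φt z x‖ ≤ X₁ ∧
      ‖φtD z x‖ ≤ X₁ ∧
      ‖θt z x‖ ≤ X₁ ∧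
      ‖θtD z x‖ ≤ ‖z‖ * X₁ ∧
      ‖θt z x - θ z x‖ ≤ X₁ * normQ / ‖z‖ ∧
      ‖φt z x - φ z x‖ ≤ X₁ * normQ / ‖z‖ ^ 2 := by
  intro z hz x hx X₁ normQ hnormQ hX₁
  subst hnormQ
  obtain rfl : X₁ = growthBound p q t z x := hX₁
  have hz0 : 0 < ‖z‖ := one_pos.trans_le hz
  have hp := intervalIntegrable_of_ae_periodic hper hpint (hx.1.trans hx.2)
  have hθb (s : ℝ) (hs : s ∈ Icc 0 t) :
      zNorm z (θt z s) (θtD z s) ≤ ‖z‖ * growthBound p q t z s := by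
    simpa [zNorm, hθ0, hθD0] using
      zNorm_le_mul_growthBound hz hp hq.intervalIntegrable (hθ z) (hθt z) (hθmatch z t le_rfl) hs
  have hφb (s : ℝ) (hs : s ∈ Icc 0 t) :
      zNorm z (φt z s) (φtD z s) ≤ 1 * growthBound p q t z s := by
    simpa [zNorm, hφ0, hφD0] using
      zNorm_le_mul_growthBound hz hp hq.intervalIntegrable (hφ z) (hφt z) (hφmatch z t le_rfl) hs
  have hθd := sq_norm_mul_norm_sub_le_growthBound hz hp hq.intervalIntegrable (hθt z) (hθ z)
    (hθmatch z t le_rfl) (fun s hs => (norm_mul_le_zNorm _ _ _).trans (hθb s hs)) hx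
  have hφd := sq_norm_mul_norm_sub_le_growthBound hz hp hq.intervalIntegrable (hφt z) (hφ z)
    (hφmatch z t le_rfl) (fun s hs => (norm_mul_le_zNorm _ _ _).trans (hφb s hs)) hx
  refine ⟨(norm_mul_le_zNorm _ _ _).trans ((hφb x hx).trans_eq (one_mul _)),
    (norm_le_zNorm _ _ _).trans ((hφb x hx).trans_eq (one_mul _)),
    le_of_mul_le_mul_left ((norm_mul_le_zNorm _ _ _).trans (hθb x hx)) hz0,
    (norm_le_zNorm _ _ _).trans (hθb x hx), ?_, ?_⟩
  · rw [le_div_iff₀ hz0]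
    refine le_of_mul_le_mul_left ?_ hz0
    linarith
  · rw [le_div_iff₀ (by positivity)]
    linarith

/-- Estimates for the perturbed solutions `θ̃, φ̃` of `-y''+(p+q)y = z²y` that
coincide with `θ, φ` (together with their derivatives) on `[t,∞)`: for
`|z| ≥ 1` and `x ∈ [0,t]`, with
`X₁ = exp(|Im z|(2t−x) + ‖q‖_t + ‖p‖_t + ∫ₓᵗ|p|)`, one has
`|z||φ̃| ≤ X₁`, `|φ̃'| ≤ X₁`, `|θ̃| ≤ X₁`, `|θ̃'| ≤ |z|X₁`,
`|θ̃−θ| ≤ X₁‖q‖_t/|z|` and `|φ̃−φ| ≤ X₁‖q‖_t/|z|²`. -/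
theorem statement_3
    (p q : ℝ → ℝ) (t : ℝ) (ht : 0 < t)
    (hper : ∀ᵐ x ∂(volume : Measure ℝ), p (x + 1) = p x)
    (hpint : IntegrableOn p (Set.Icc 0 1))
    (hq : Integrable q) (hqsupp : Function.support q ⊆ Set.Icc 0 t)
    (θ φ θD φD : ℂ → ℝ → ℂ)
    (hθ : ∀ z : ℂ, IsSol p z (θ z) (θD z))
    (hθ0 : ∀ z : ℂ, θ z 0 = 1) (hθD0 : ∀ z : ℂ, θD z 0 = 0)
    (hφ : ∀ z : ℂ, IsSol p z (φ z) (φD z))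
    (hφ0 : ∀ z : ℂ, φ z 0 = 0) (hφD0 : ∀ z : ℂ, φD z 0 = 1)
    (θt φt θtD φtD : ℂ → ℝ → ℂ)
    (hθt : ∀ z : ℂ, IsSol (fun x => p x + q x) z (θt z) (θtD z))
    (hφt : ∀ z : ℂ, IsSol (fun x => p x + q x) z (φt z) (φtD z))
    (hθmatch : ∀ z : ℂ, ∀ x : ℝ, t ≤ x → θt z x = θ z x ∧ θtD z x = θD z x)
    (hφmatch : ∀ z : ℂ, ∀ x : ℝ, t ≤ x → φt z x = φ z x ∧ φtD z x = φD z x) :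
    ∀ z : ℂ, 1 ≤ ‖z‖ → ∀ x ∈ Set.Icc (0:ℝ) t, ∀ X₁ normQ : ℝ,
      normQ = (∫ s in (0:ℝ)..t, |q s|) →
      X₁ = Real.exp (|z.im| * (2 * t - x) + normQ + (∫ s in (0:ℝ)..t, |p s|)
              + ∫ τ in x..t, |p τ|) →
      ‖z‖ * ‖φt z x‖ ≤ X₁ ∧
      ‖φtD z x‖ ≤ X₁ ∧
      ‖θt z x‖ ≤ X₁ ∧
      ‖θtD z x‖ ≤ ‖z‖ * X₁ ∧
      ‖θt z x - θ z x‖ ≤ X₁ * normQ / ‖z‖ ∧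
      ‖φt z x - φ z x‖ ≤ X₁ * normQ / ‖z‖ ^ 2 :=
  statement_3_general p q t hper hpint hq θ φ θD φD hθ hθ0 hθD0 hφ hφ0 hφD0 θt φt θtD φtD hθt hφt
    hθmatch hφmatch

end
end

section
/- Fix z ∈ ℂ. Let y₀ : ℝ → ℂ be any solution of −y'' + p·y = z²·y on ℝ, and let f : ℝ → ℂ solve −f'' + (p+q)·f = z²·f on ℝ with f = y₀ and f' = y₀' on [t,∞). Then for every x ≤ t: f(x) = y₀(x) − ∫ₓᵗ (θ(τ,z)·φ(x,z) − φ(τ,z)·θ(x,z))·q(τ)·f(τ) dτ. -/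
/-
The Wronskian `W(u, v) = u v' - u' v` of two solutions of `-y'' + P y = z² y` is constant, and if
`v` instead solves the equation with potential `P + q`, then `W(u, v)(t) - W(u, v)(x) = ∫ₓᵗ q u v`.
Taking `u = θ, φ` and `v = f, y₀`, and using `f = y₀`, `f' = y₀'` at `t`, this determines
`W(θ, y₀ - f)(x)` and `W(φ, y₀ - f)(x)`; since `W(θ, φ) = 1`, Cramer's rule recovers
`(y₀ - f)(x) = φ(x) W(θ, y₀ - f)(x) - θ(x) W(φ, y₀ - f)(x)`, which is the formula.
Solutions here are only `C¹` with absolutely continuous derivative, so the Wronskian identity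
is proved by the fundamental theorem of calculus for absolutely continuous functions; the
potential `p` is locally integrable because it is periodic and integrable over one period.
-/

open MeasureTheory

noncomputable section

open Set Filter Function intervalIntegral
open scoped NNReal

theorem LipschitzWith.comp_absolutelyContinuousOnInterval {X Y : Type*} [PseudoMetricSpace X]
    [PseudoMetricSpace Y] {K : ℝ≥0} {L : X → Y} (hL : LipschitzWith K L) {f : ℝ → X} {a b : ℝ}
    (hf : AbsolutelyContinuousOnInterval f a b) : AbsolutelyContinuousOnInterval (L ∘ f) a b := by
  have hK := Tendsto.const_mul (K : ℝ) hf
  rw [mul_zero] at hK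
  refine squeeze_zero (fun _ => Finset.sum_nonneg fun _ _ => dist_nonneg) (fun E => ?_) hK
  rw [Finset.mul_sum]
  exact Finset.sum_le_sum fun i _ => hL.dist_le_mul _ _

namespace MeasureTheory

theorem LocallyIntegrable.ofReal {X : Type*} [TopologicalSpace X] [MeasurableSpace X]
    {μ : Measure X} {f : X → ℝ} (hf : LocallyIntegrable f μ) :
    LocallyIntegrable (fun x => (f x : ℂ)) μ := fun x =>
  let ⟨s, hs, hfs⟩ := hf x
  ⟨s, hs, hfs.ofReal⟩

theorem locallyIntegrable_of_forall_intervalIntegrable {E : Type*} [NormedAddCommGroup E]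
    {f : ℝ → E} (hf : ∀ a b, IntervalIntegrable f volume a b) : LocallyIntegrable f volume :=
  fun x => ⟨Ioo (x - 1) (x + 1), Ioo_mem_nhds (by linarith) (by linarith),
    (hf _ _).1.mono_set Ioo_subset_Ioc_self⟩

theorem LocallyIntegrable.intervalIntegrable {E : Type*} [NormedAddCommGroup E] {f : ℝ → E}
    (hf : LocallyIntegrable f volume) (a b : ℝ) : IntervalIntegrable f volume a b :=
  (hf.integrableOn_isCompact isCompact_uIcc).intervalIntegrable

theorem ae_add_zsmul_eq_of_ae_add_eq {E : Type*} {p : ℝ → E} {T : ℝ}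
    (hper : ∀ᵐ x, p (x + T) = p x) (n : ℤ) : ∀ᵐ x, p (x + n • T) = p x := by
  have shift (c : ℝ) : ∀ᵐ x, p (x + c + T) = p (x + c) :=
    (measurePreserving_add_right volume c).quasiMeasurePreserving.ae hper
  induction n using Int.induction_on with
  | zero => simp
  | succ n ih =>
    filter_upwards [shift ((n : ℤ) • T), ih] with x h1 h2
    rw [add_zsmul, one_zsmul, ← add_assoc, h1, h2]
  | pred n ih =>
    filter_upwards [shift ((-n - 1 : ℤ) • T), ih] with x h1 h2
    rw [← h1, add_assoc, ← add_one_zsmul, sub_add_cancel, ← h2]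

theorem locallyIntegrable_of_ae_periodic {E : Type*} [NormedAddCommGroup E] {p : ℝ → E} {T : ℝ}
    (hT : 0 < T) (hper : ∀ᵐ x, p (x + T) = p x) (hint : IntegrableOn p (Icc 0 T)) :
    LocallyIntegrable p volume := by
  -- `p'` is periodic everywhere and agrees with `p` almost everywhere.
  set p' : ℝ → E := fun x => p (toIcoMod hT 0 x)
  have hp' : Periodic p' T := fun x => by simp [p', toIcoMod_add_right]
  have hae : p' =ᵐ[volume] p := by
    filter_upwards [ae_all_iff.2 (ae_add_zsmul_eq_of_ae_add_eq hper)] with x hx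
    simpa [p', toIcoMod, sub_eq_add_neg, ← neg_zsmul] using hx (-toIcoDiv hT 0 x)
  have h0 : IntervalIntegrable p' volume 0 T :=
    ((intervalIntegrable_iff_integrableOn_Icc_of_le hT.le).2 hint).congr_ae
      (ae_restrict_of_ae hae.symm)
  exact (locallyIntegrable_of_forall_intervalIntegrable
    (hp'.intervalIntegrable₀ hT.ne' h0)).congr hae

theorem LocallyIntegrable.absolutelyContinuousOnInterval_integral {g : ℝ → ℂ}
    (hg : LocallyIntegrable g volume) (a b : ℝ) :
    AbsolutelyContinuousOnInterval (fun x => ∫ t in a..x, g t) a b := by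
  have hre : AbsolutelyContinuousOnInterval (fun x => ∫ t in a..x, (g t).re) a b :=
    IntervalIntegrable.absolutelyContinuousOnInterval_intervalIntegral
      ⟨(hg.intervalIntegrable a b).1.re, (hg.intervalIntegrable a b).2.re⟩ left_mem_uIcc
  have him : AbsolutelyContinuousOnInterval (fun x => ∫ t in a..x, (g t).im) a b :=
    IntervalIntegrable.absolutelyContinuousOnInterval_intervalIntegral
      ⟨(hg.intervalIntegrable a b).1.im, (hg.intervalIntegrable a b).2.im⟩ left_mem_uIcc
  have hsplit : (fun x => ∫ t in a..x, g t) = ((↑) ∘ fun x => ∫ t in a..x, (g t).re) +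
      Complex.I • ((↑) ∘ fun x => ∫ t in a..x, (g t).im) := by
    funext x
    have hr := intervalIntegral_re (hg.intervalIntegrable a x)
    have hi := intervalIntegral_im (hg.intervalIntegrable a x)
    simp only [RCLike.re_to_complex, RCLike.im_to_complex] at hr hi
    simp only [Pi.add_apply, Pi.smul_apply, comp_apply, hr, hi, smul_eq_mul]
    rw [mul_comm, Complex.re_add_im]
  have hofReal := Complex.isometry_ofReal.lipschitz
  rw [hsplit]
  exact (hofReal.comp_absolutelyContinuousOnInterval hre).add
    ((hofReal.comp_absolutelyContinuousOnInterval him).const_smul Complex.I)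

end MeasureTheory

section Primitive

variable {E : Type*} [NormedAddCommGroup E] [NormedSpace ℝ E] {F g : ℝ → E}

theorem eq_add_integral_of_eq_add_integral (hg : LocallyIntegrable g volume) {c : ℝ}
    (hF : ∀ x, F x = F c + ∫ t in c..x, g t) (a x : ℝ) : F x = F a + ∫ t in a..x, g t := by
  rw [hF x, hF a, add_assoc, integral_add_adjacent_intervals (hg.intervalIntegrable c a)
    (hg.intervalIntegrable a x)]

theorem continuous_of_eq_add_integral (hg : LocallyIntegrable g volume) {c : ℝ}
    (hF : ∀ x, F x = F c + ∫ t in c..x, g t) : Continuous F := by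
  rw [funext hF]
  exact continuous_const.add (continuous_primitive hg.intervalIntegrable c)

end Primitive

theorem absolutelyContinuousOnInterval_of_eq_add_integral {F g : ℝ → ℂ}
    (hg : LocallyIntegrable g volume) {c : ℝ} (hF : ∀ x, F x = F c + ∫ t in c..x, g t)
    (a b : ℝ) : AbsolutelyContinuousOnInterval F a b := by
  rw [funext (eq_add_integral_of_eq_add_integral hg hF a)]
  exact (LipschitzWith.const _).lipschitzOnWith.absolutelyContinuousOnInterval.add
    (hg.absolutelyContinuousOnInterval_integral a b)

def wronskian (u u' v v' : ℝ → ℂ) (x : ℝ) : ℂ := u x * v' x - u' x * v x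

/-- `u`, `v`, `u'`, `v'` are absolutely continuous, so the Wronskian minus the integral of its
a.e. derivative is absolutely continuous with zero derivative a.e., hence constant. -/
theorem wronskian_sub_wronskian {u u' gu v v' gv : ℝ → ℂ}
    (hu : ∀ x, HasDerivAt u (u' x) x) (hv : ∀ x, HasDerivAt v (v' x) x)
    (hgu : LocallyIntegrable gu volume) (hgv : LocallyIntegrable gv volume)
    (hu' : ∀ x, u' x = u' 0 + ∫ t in 0..x, gu t) (hv' : ∀ x, v' x = v' 0 + ∫ t in 0..x, gv t)
    (a b : ℝ) :
    wronskian u u' v v' b - wronskian u u' v v' a = ∫ x in a..b, (u x * gv x - v x * gu x) := by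
  have hu'c := continuous_of_eq_add_integral hgu hu'
  have hv'c := continuous_of_eq_add_integral hgv hv'
  have huc : Continuous u := continuous_iff_continuousAt.2 fun x => (hu x).continuousAt
  have hvc : Continuous v := continuous_iff_continuousAt.2 fun x => (hv x).continuousAt
  have ftc {w w' : ℝ → ℂ} (hw : ∀ x, HasDerivAt w (w' x) x) (hw' : Continuous w') (x : ℝ) :
      w x = w 0 + ∫ t in 0..x, w' t := by
    rw [integral_eq_sub_of_hasDerivAt (fun y _ => hw y) (hw'.intervalIntegrable 0 x)]
    abel
  have hac {w w' : ℝ → ℂ} (hw : ∀ x, HasDerivAt w (w' x) x) (hw' : Continuous w') :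
      AbsolutelyContinuousOnInterval w a b :=
    absolutelyContinuousOnInterval_of_eq_add_integral hw'.locallyIntegrable (ftc hw hw') a b
  have hh : LocallyIntegrable (fun x => u x * gv x - v x * gu x) volume :=
    (hgv.continuous_mul huc).sub (hgu.continuous_mul hvc)
  set G : ℝ → ℂ := fun x => u x * v' x - u' x * v x - ∫ t in a..x, (u t * gv t - v t * gu t)
  have hG : AbsolutelyContinuousOnInterval G a b :=
    (((hac hu hu'c).fun_smul (absolutelyContinuousOnInterval_of_eq_add_integral hgv hv' a b)).sub
      ((absolutelyContinuousOnInterval_of_eq_add_integral hgu hu' a b).fun_smul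
        (hac hv hv'c))).sub (hh.absolutelyContinuousOnInterval_integral a b)
  have hG' : ∀ᵐ x, x ∈ uIcc a b → HasDerivAt G 0 x := by
    filter_upwards [LocallyIntegrable.ae_hasDerivAt_integral hgu,
      LocallyIntegrable.ae_hasDerivAt_integral hgv,
      LocallyIntegrable.ae_hasDerivAt_integral hh] with x hgux hgvx hhx _
    have du' : HasDerivAt u' (gu x) x := by rw [funext hu']; exact (hgux 0).const_add _
    have dv' : HasDerivAt v' (gv x) x := by rw [funext hv']; exact (hgvx 0).const_add _
    exact ((((hu x).mul dv').sub (du'.mul (hv x))).sub (hhx a)).congr_deriv (by ring)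
  obtain ⟨C, hC⟩ := hG.const_of_ae_hasDerivAt_zero hG'
  have hGa := hC a left_mem_uIcc
  have hGb := hC b right_mem_uIcc
  simp only [G, integral_same, sub_zero] at hGa hGb
  simp only [wronskian]
  linear_combination hGb - hGa

namespace IsSol

variable {P : ℝ → ℝ} {z : ℂ} {u u' v v' : ℝ → ℂ}

theorem continuous_s4 (hu : IsSol P z u u') : Continuous u :=
  continuous_iff_continuousAt.2 fun x => (hu.1 x).continuousAt

theorem locallyIntegrable_potential_mul (hP : LocallyIntegrable P volume) (hu : IsSol P z u u') :
    LocallyIntegrable (fun x => ((P x : ℂ) - z ^ 2) * u x) volume :=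
  (hP.ofReal.sub (locallyIntegrable_const _)).mul_continuous hu.continuous_s4

theorem wronskian_sub_wronskian_of_add {Q : ℝ → ℝ} (hP : LocallyIntegrable P volume)
    (hQ : LocallyIntegrable Q volume) (hu : IsSol P z u u')
    (hv : IsSol (fun x => P x + Q x) z v v') (a b : ℝ) :
    wronskian u u' v v' b - wronskian u u' v v' a = ∫ x in a..b, (Q x : ℂ) * u x * v x := by
  rw [wronskian_sub_wronskian hu.1 hv.1 (hu.locallyIntegrable_potential_mul hP)
    (hv.locallyIntegrable_potential_mul (hP.add hQ)) hu.2 hv.2]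
  refine integral_congr fun x _ => ?_
  simp only [Pi.add_apply, Complex.ofReal_add]
  ring

theorem wronskian_eq (hP : LocallyIntegrable P volume) (hu : IsSol P z u u')
    (hv : IsSol P z v v') (a b : ℝ) : wronskian u u' v v' b = wronskian u u' v v' a := by
  rw [← sub_eq_zero, wronskian_sub_wronskian hu.1 hv.1 (hu.locallyIntegrable_potential_mul hP)
    (hv.locallyIntegrable_potential_mul hP) hu.2 hv.2]
  exact (integral_congr fun x _ => by ring).trans integral_zero

end IsSol

theorem statement_4_general
    (p q : ℝ → ℝ) (t : ℝ)
    (hper : ∀ᵐ x ∂(volume : Measure ℝ), p (x + 1) = p x)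
    (hpint : IntegrableOn p (Set.Icc 0 1))
    (hq : Integrable q)
    (z : ℂ)
    (θ φ θD φD : ℝ → ℂ)
    (hθ : IsSol p z θ θD) (hθ0 : θ 0 = 1) (hθD0 : θD 0 = 0)
    (hφ : IsSol p z φ φD) (hφ0 : φ 0 = 0) (hφD0 : φD 0 = 1)
    (y₀ y₀D f fD : ℝ → ℂ)
    (hy₀ : IsSol p z y₀ y₀D)
    (hf : IsSol (fun x => p x + q x) z f fD)
    (hmatch : ∀ x : ℝ, t ≤ x → f x = y₀ x ∧ fD x = y₀D x) :
    ∀ x : ℝ, x ≤ t →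
      f x = y₀ x - ∫ τ in x..t, (θ τ * φ x - φ τ * θ x) * (q τ : ℂ) * f τ := by
  intro x _
  have hp := locallyIntegrable_of_ae_periodic one_pos hper hpint
  have hql := hq.locallyIntegrable
  have hWθf := hθ.wronskian_sub_wronskian_of_add hp hql hf x t
  have hWφf := hφ.wronskian_sub_wronskian_of_add hp hql hf x t
  have hWθy := hθ.wronskian_eq hp hy₀ t x
  have hWφy := hφ.wronskian_eq hp hy₀ t x
  have hWθφ := hθ.wronskian_eq hp hφ x 0
  obtain ⟨hft, hfDt⟩ := hmatch t le_rfl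
  have hsplit : ∫ τ in x..t, (θ τ * φ x - φ τ * θ x) * (q τ : ℂ) * f τ
      = φ x * (∫ τ in x..t, (q τ : ℂ) * θ τ * f τ) - θ x * ∫ τ in x..t, (q τ : ℂ) * φ τ * f τ := by
    have hint {w : ℝ → ℂ} (hw : Continuous w) :
        IntervalIntegrable (fun τ => (q τ : ℂ) * w τ * f τ) volume x t :=
      ((hql.ofReal.mul_continuous hw).mul_continuous hf.continuous_s4).intervalIntegrable x t
    rw [← intervalIntegral.integral_const_mul, ← intervalIntegral.integral_const_mul,
      ← integral_sub ((hint hθ.continuous_s4).const_mul _) ((hint hφ.continuous_s4).const_mul _)]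
    exact integral_congr fun τ _ => by ring
  simp only [wronskian, hft, hfDt, hθ0, hφ0, hθD0, hφD0] at hWθf hWφf hWθy hWφy hWθφ
  rw [hsplit]
  linear_combination -φ x * hWθf + θ x * hWφf - φ x * hWθy + θ x * hWφy + (f x - y₀ x) * hWθφ

/-- Volterra representation of the perturbed solution: if `f` solves
`-f''+(p+q)f = z²f` and coincides (with its derivative) with a solution `y₀`
of `-y''+p·y = z²y` on `[t,∞)`, then for `x ≤ t`
`f(x) = y₀(x) − ∫ₓᵗ (θ(τ)φ(x) − φ(τ)θ(x)) q(τ) f(τ) dτ`. -/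
theorem statement_4
    (p q : ℝ → ℝ) (t : ℝ) (ht : 0 < t)
    (hper : ∀ᵐ x ∂(volume : Measure ℝ), p (x + 1) = p x)
    (hpint : IntegrableOn p (Set.Icc 0 1))
    (hq : Integrable q) (hqsupp : Function.support q ⊆ Set.Icc 0 t)
    (z : ℂ)
    (θ φ θD φD : ℝ → ℂ)
    (hθ : IsSol p z θ θD) (hθ0 : θ 0 = 1) (hθD0 : θD 0 = 0)
    (hφ : IsSol p z φ φD) (hφ0 : φ 0 = 0) (hφD0 : φD 0 = 1)
    (y₀ y₀D f fD : ℝ → ℂ)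
    (hy₀ : IsSol p z y₀ y₀D)
    (hf : IsSol (fun x => p x + q x) z f fD)
    (hmatch : ∀ x : ℝ, t ≤ x → f x = y₀ x ∧ fD x = y₀D x) :
    ∀ x : ℝ, x ≤ t →
      f x = y₀ x - ∫ τ in x..t, (θ τ * φ x - φ τ * θ x) * (q τ : ℂ) * f τ :=
  statement_4_general p q t hper hpint hq z θ φ θD φD hθ hθ0 hθD0 hφ hφ0 hφD0 y₀ y₀D f fD hy₀ hf
    hmatch
end
end

section
/- Let D ⊂ ℂ be an open disk centered at a point of the real axis and let g : D → ℂ be analytic, real-valued on D ∩ ℝ, and have exactly two zeros in D counted with multiplicity. Suppose a, b, c are real numbers in D with a < c < b, g(a) ≥ 0, g(c) < 0, and g(b) ≥ 0. Then the two zeros of g in D are real and simple, one of them lies in [a,c) and the other lies in (c,b]. -/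
open Set

/- On the real segment `[a, b]` the real part of `g` is continuous and changes sign on
`[a, c]` and on `[c, b]`, so the intermediate value theorem gives real zeros `x ∈ [a, c)` and
`y ∈ (c, b]` (they avoid `c` because `g c < 0`). Both are zeros of `(z - z₁)(z - z₂)h`, hence lie in
`{z₁, z₂}`; since `x < y` they are distinct, so they are exactly `z₁` and `z₂`, which are therefore
real and simple. -/

theorem Convex.ofReal_mem_of_mem_Icc {s : Set ℂ} (hs : Convex ℝ s) {a b x : ℝ}
    (ha : (a : ℂ) ∈ s) (hb : (b : ℂ) ∈ s) (hx : x ∈ Icc a b) : (x : ℂ) ∈ s := by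
  refine hs.segment_subset ha hb ?_
  have hx' : x ∈ segment ℝ a b := by rwa [segment_eq_Icc (hx.1.trans hx.2)]
  have := mem_image_of_mem Complex.ofRealCLM.toLinearMap.toAffineMap hx'
  rwa [image_segment] at this

theorem exists_mem_Ico_eq_zero_of_nonneg_of_neg {f : ℝ → ℝ} {a c : ℝ} (hac : a ≤ c)
    (hf : ContinuousOn f (Icc a c)) (ha : 0 ≤ f a) (hc : f c < 0) :
    ∃ x ∈ Ico a c, f x = 0 := by
  obtain ⟨x, hx, hfx⟩ := intermediate_value_Icc' hac hf ⟨hc.le, ha⟩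
  refine ⟨x, ⟨hx.1, lt_of_le_of_ne hx.2 ?_⟩, hfx⟩
  rintro rfl
  exact hc.ne hfx

theorem exists_mem_Ioc_eq_zero_of_neg_of_nonneg {f : ℝ → ℝ} {c b : ℝ} (hcb : c ≤ b)
    (hf : ContinuousOn f (Icc c b)) (hc : f c < 0) (hb : 0 ≤ f b) :
    ∃ x ∈ Ioc c b, f x = 0 := by
  obtain ⟨x, hx, hfx⟩ := intermediate_value_Icc hcb hf ⟨hc.le, hb⟩
  refine ⟨x, ⟨lt_of_le_of_ne hx.1 ?_, hx.2⟩, hfx⟩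
  rintro rfl
  exact hc.ne hfx

theorem eq_or_eq_of_sub_mul_sub_mul_eq_zero {R : Type*} [CommRing R] [NoZeroDivisors R]
    {z z₁ z₂ w : R} (hw : w ≠ 0) (h : (z - z₁) * (z - z₂) * w = 0) : z = z₁ ∨ z = z₂ := by
  simpa [hw, sub_eq_zero] using h

theorem eq_and_eq_or_eq_and_eq_of_ne {α : Type*} {x y z₁ z₂ : α} (hx : x = z₁ ∨ x = z₂)
    (hy : y = z₁ ∨ y = z₂) (hxy : x ≠ y) : (z₁ = x ∧ z₂ = y) ∨ (z₁ = y ∧ z₂ = x) := by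
  rcases hx with rfl | rfl <;> rcases hy with rfl | rfl <;> simp_all

theorem statement_17_general
    (x₀ r : ℝ)
    (g : ℂ → ℂ)
    (hg : AnalyticOnNhd ℂ g (Metric.ball (x₀ : ℂ) r))
    (hreal : ∀ x : ℝ, (x : ℂ) ∈ Metric.ball (x₀ : ℂ) r → (g x).im = 0)
    (z₁ z₂ : ℂ) (h : ℂ → ℂ)
    (hh0 : ∀ z ∈ Metric.ball (x₀ : ℂ) r, h z ≠ 0)
    (hfac : ∀ z ∈ Metric.ball (x₀ : ℂ) r, g z = (z - z₁) * (z - z₂) * h z)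
    (a c b : ℝ) (hac : a < c) (hcb : c < b)
    (ha : (a : ℂ) ∈ Metric.ball (x₀ : ℂ) r)
    (hb : (b : ℂ) ∈ Metric.ball (x₀ : ℂ) r)
    (hga : 0 ≤ (g a).re) (hgc : (g c).re < 0) (hgb : 0 ≤ (g b).re) :
    z₁.im = 0 ∧ z₂.im = 0 ∧ z₁ ≠ z₂ ∧
    ((z₁.re ∈ Set.Ico a c ∧ z₂.re ∈ Set.Ioc c b) ∨
      (z₂.re ∈ Set.Ico a c ∧ z₁.re ∈ Set.Ioc c b)) := by
  have hmem : ∀ x ∈ Icc a b, (x : ℂ) ∈ Metric.ball (x₀ : ℂ) r :=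
    fun x hx => (convex_ball _ _).ofReal_mem_of_mem_Icc ha hb hx
  have hcont : ContinuousOn (fun x : ℝ => (g x).re) (Icc a b) :=
    Complex.continuous_re.comp_continuousOn
      (hg.continuousOn.comp Complex.continuous_ofReal.continuousOn hmem)
  have hroot : ∀ x ∈ Icc a b, (g x).re = 0 → (x : ℂ) = z₁ ∨ (x : ℂ) = z₂ := fun x hx hre =>
    eq_or_eq_of_sub_mul_sub_mul_eq_zero (hh0 x (hmem x hx))
      ((hfac x (hmem x hx)).symm.trans (Complex.ext hre (hreal x (hmem x hx))))
  obtain ⟨x, hx, hgx⟩ := exists_mem_Ico_eq_zero_of_nonneg_of_neg hac.le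
    (hcont.mono (Icc_subset_Icc le_rfl hcb.le)) hga hgc
  obtain ⟨y, hy, hgy⟩ := exists_mem_Ioc_eq_zero_of_neg_of_nonneg hcb.le
    (hcont.mono (Icc_subset_Icc hac.le le_rfl)) hgc hgb
  have hxy : (x : ℂ) ≠ y := Complex.ofReal_injective.ne (hx.2.trans hy.1).ne
  rcases eq_and_eq_or_eq_and_eq_of_ne (hroot x ⟨hx.1, hx.2.le.trans hcb.le⟩ hgx)
    (hroot y ⟨hac.le.trans hy.1.le, hy.2⟩ hgy) hxy with ⟨rfl, rfl⟩ | ⟨rfl, rfl⟩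
  · simp [hxy, hx, hy]
  · simp [hxy.symm, hx, hy]

/-- If `g` is analytic on an open disk centered on the real axis, real-valued
on the real points of the disk, has exactly two zeros (with multiplicity,
i.e. `g = (z−z₁)(z−z₂)h` with `h` zero-free), and `g(a) ≥ 0 > g(c)`,
`g(b) ≥ 0` for real `a < c < b` in the disk, then the two zeros are real,
simple, one lying in `[a,c)` and the other in `(c,b]`. -/
theorem statement_17
    (x₀ r : ℝ) (hr : 0 < r)
    (g : ℂ → ℂ)
    (hg : AnalyticOnNhd ℂ g (Metric.ball (x₀ : ℂ) r))
    (hreal : ∀ x : ℝ, (x : ℂ) ∈ Metric.ball (x₀ : ℂ) r → (g x).im = 0)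
    (z₁ z₂ : ℂ) (h : ℂ → ℂ)
    (hz₁ : z₁ ∈ Metric.ball (x₀ : ℂ) r) (hz₂ : z₂ ∈ Metric.ball (x₀ : ℂ) r)
    (hh : AnalyticOnNhd ℂ h (Metric.ball (x₀ : ℂ) r))
    (hh0 : ∀ z ∈ Metric.ball (x₀ : ℂ) r, h z ≠ 0)
    (hfac : ∀ z ∈ Metric.ball (x₀ : ℂ) r, g z = (z - z₁) * (z - z₂) * h z)
    (a c b : ℝ) (hac : a < c) (hcb : c < b)
    (ha : (a : ℂ) ∈ Metric.ball (x₀ : ℂ) r)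
    (hc : (c : ℂ) ∈ Metric.ball (x₀ : ℂ) r)
    (hb : (b : ℂ) ∈ Metric.ball (x₀ : ℂ) r)
    (hga : 0 ≤ (g a).re) (hgc : (g c).re < 0) (hgb : 0 ≤ (g b).re) :
    z₁.im = 0 ∧ z₂.im = 0 ∧ z₁ ≠ z₂ ∧
    ((z₁.re ∈ Set.Ico a c ∧ z₂.re ∈ Set.Ioc c b) ∨
      (z₂.re ∈ Set.Ico a c ∧ z₁.re ∈ Set.Ioc c b)) :=
  statement_17_general x₀ r g hg hreal z₁ z₂ h hh0 hfac a c b hac hcb ha hb hga hgc hgb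
end

section
/- Let a < b be real numbers and let F be a real-valued function that is real-analytic on an open interval containing [a,b], with F(a) > 0 and F(b) > 0. Then F has only finitely many zeros in (a,b), and the sum of their multiplicities (the orders of vanishing of F at these zeros) is an even number. -/
open Filter Set
open scoped Topology

/-! Near a zero `c` of order `m` we have `F z = (z - c) ^ m * g z` with `g c ≠ 0`, so the sign of
`F` just left of `c` is `(-1) ^ m` times its sign just right of `c`, while between consecutive
zeros the sign is constant by the intermediate value theorem. Hence
`sign (F a) = (-1) ^ (∑ m) * sign (F b)`, and `F a, F b > 0` force the sum to be even. There are
finitely many zeros by the identity theorem on the compact connected set `[a, b]`. -/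

theorem IsPreconnected.sign_eq_of_forall_ne_zero {X α : Type*} [TopologicalSpace X]
    [LinearOrder α] [Zero α] [TopologicalSpace α] [OrderClosedTopology α]
    {s : Set X} (hs : IsPreconnected s) {f : X → α} (hf : ContinuousOn f s)
    (hf₀ : ∀ x ∈ s, f x ≠ 0) {x y : X} (hx : x ∈ s) (hy : y ∈ s) :
    SignType.sign (f x) = SignType.sign (f y) := by
  have no_sign_change {u v : X} (hu : u ∈ s) (hv : v ∈ s) (hu' : f u < 0) (hv' : 0 < f v) :
      False := by
    obtain ⟨w, hw, hw₀⟩ := hs.intermediate_value hu hv hf ⟨hu'.le, hv'.le⟩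
    exact hf₀ w hw hw₀
  rcases (hf₀ x hx).lt_or_gt with hx' | hx' <;> rcases (hf₀ y hy).lt_or_gt with hy' | hy'
  · rw [sign_neg hx', sign_neg hy']
  · exact (no_sign_change hx hy hx' hy').elim
  · exact (no_sign_change hy hx hy' hx').elim
  · rw [sign_pos hx', sign_pos hy']

theorem AnalyticOnNhd.finite_setOf_eq_zero {𝕜 E : Type*} [NontriviallyNormedField 𝕜]
    [NormedAddCommGroup E] [NormedSpace 𝕜 E] {f : 𝕜 → E} {K : Set 𝕜}
    (hf : AnalyticOnNhd 𝕜 f K) (hK : IsCompact K) (hK' : IsPreconnected K) {z₀ : 𝕜}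
    (hz₀ : z₀ ∈ K) (hfz₀ : f z₀ ≠ 0) :
    {z ∈ K | f z = 0}.Finite := by
  have hne := (hf.eqOn_zero_or_eventually_ne_zero_of_preconnected hK').resolve_left
    fun h ↦ hfz₀ (h hz₀)
  exact (hK.finite_sdiff_of_mem_codiscreteWithin hne).subset fun z hz ↦ ⟨hz.1, not_not.2 hz.2⟩

theorem AnalyticAt.exists_eventually_sign_eq {F : ℝ → ℝ} {c : ℝ} (hF : AnalyticAt ℝ F c)
    (hc : analyticOrderAt F c ≠ ⊤) :
    ∃ σ : SignType, ∀ᶠ z in 𝓝 c,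
      SignType.sign (F z) = SignType.sign (z - c) ^ analyticOrderNatAt F c * σ := by
  obtain ⟨g, hg, hgc, hFg⟩ := hF.analyticOrderAt_ne_top.mp hc
  have hsign : ∀ᶠ z in 𝓝 c, SignType.sign (g z) = SignType.sign (g c) := by
    have := ((continuousAt_sign_of_ne_zero hgc).comp hg.continuousAt).tendsto
    rw [nhds_discrete SignType] at this
    exact tendsto_pure.1 this
  refine ⟨SignType.sign (g c), ?_⟩
  filter_upwards [hFg, hsign] with z hz hgz
  rw [hz, smul_eq_mul, sign_mul, sign_pow, hgz]

theorem sign_eq_neg_one_pow_sum_mul_sign {F : ℝ → ℝ} {m : ℝ → ℕ} (S : Finset ℝ) {a b : ℝ}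
    (hab : a ≤ b) (hF : ContinuousOn F (Icc a b)) (hS : ∀ x ∈ S, x ∈ Ioo a b)
    (hzero : ∀ x ∈ Icc a b, F x = 0 → x ∈ S)
    (hloc : ∀ c ∈ S, ∃ σ : SignType, ∀ᶠ z in 𝓝 c,
      SignType.sign (F z) = SignType.sign (z - c) ^ m c * σ) :
    SignType.sign (F a) = (-1) ^ (∑ x ∈ S, m x) * SignType.sign (F b) := by
  classical
  induction S using Finset.induction_on_max generalizing b with
  | empty =>
    rw [Finset.sum_empty, pow_zero, one_mul]
    exact isPreconnected_Icc.sign_eq_of_forall_ne_zero hF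
      (fun x hx h₀ ↦ Finset.notMem_empty x (hzero x hx h₀))
      (left_mem_Icc.2 hab) (right_mem_Icc.2 hab)
  | insert c s hlt ih =>
    have hc : c ∈ insert c s := Finset.mem_insert_self c s
    obtain ⟨hac, hcb⟩ := hS c hc
    obtain ⟨σ, hσ⟩ := hloc c hc
    have hleft : ∀ᶠ z in 𝓝[<] c, (a < z ∧ ∀ x ∈ s, x < z) ∧ z < c ∧
        SignType.sign (F z) = SignType.sign (z - c) ^ m c * σ := by
      filter_upwards [Ioo_mem_nhdsLT hac, (eventually_all_finset s (p := fun x z ↦ x < z)).2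
        fun x hx ↦ mem_of_superset (Ioo_mem_nhdsLT (hlt x hx)) fun _ hz ↦ hz.1,
        nhdsWithin_le_nhds hσ] with z hz hsz hFz
      exact ⟨⟨hz.1, hsz⟩, hz.2, hFz⟩
    have hright : ∀ᶠ z in 𝓝[>] c, z < b ∧ c < z ∧
        SignType.sign (F z) = SignType.sign (z - c) ^ m c * σ := by
      filter_upwards [Ioo_mem_nhdsGT hcb, nhdsWithin_le_nhds hσ] with z hz hFz
      exact ⟨hz.2, hz.1, hFz⟩
    obtain ⟨u, ⟨hau, hsu⟩, huc, hFu⟩ := hleft.exists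
    obtain ⟨v, hvb, hcv, hFv⟩ := hright.exists
    have h_left : SignType.sign (F a) = (-1) ^ (∑ x ∈ s, m x) * SignType.sign (F u) := by
      refine ih hau.le (hF.mono (Icc_subset_Icc_right (huc.trans hcb).le))
        (fun x hx ↦ ⟨(hS x (Finset.mem_insert_of_mem hx)).1, hsu x hx⟩)
        (fun x hx h₀ ↦ ?_) (fun x hx ↦ hloc x (Finset.mem_insert_of_mem hx))
      have := hzero x ⟨hx.1, hx.2.trans (huc.trans hcb).le⟩ h₀
      exact (Finset.mem_insert.1 this).resolve_left (hx.2.trans_lt huc).ne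
    have h_right : SignType.sign (F v) = SignType.sign (F b) := by
      refine isPreconnected_Icc.sign_eq_of_forall_ne_zero (hF.mono (Icc_subset_Icc_left
        (hac.trans hcv).le)) (fun x hx h₀ ↦ ?_) (left_mem_Icc.2 hvb.le) (right_mem_Icc.2 hvb.le)
      have hcx : c < x := hcv.trans_le hx.1
      rcases Finset.mem_insert.1 (hzero x ⟨(hac.trans hcx).le, hx.2⟩ h₀) with rfl | hxs
      · exact hcx.false
      · exact (hlt x hxs).not_gt hcx
    rw [hFu, sign_neg (sub_neg.2 huc)] at h_left
    rw [hFv, sign_pos (sub_pos.2 hcv), one_pow, one_mul] at h_right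
    rw [Finset.sum_insert fun h ↦ (hlt c h).false, h_left, ← h_right, pow_add, mul_assoc,
      mul_left_comm]

theorem statement_18_general
    (a b : ℝ) (hab : a < b)
    (I : Set ℝ) (hIab : Set.Icc a b ⊆ I)
    (F : ℝ → ℝ) (hF : AnalyticOnNhd ℝ F I)
    (hFa : 0 < F a) (hFb : 0 < F b) :
    ∃ (S : Finset ℝ) (m : ℝ → ℕ),
      (∀ x ∈ S, x ∈ Set.Ioo a b) ∧
      (∀ x ∈ Set.Ioo a b, (F x = 0 ↔ x ∈ S)) ∧
      (∀ x ∈ S, 0 < m x ∧ iteratedDeriv (m x) F x ≠ 0 ∧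
        ∀ k : ℕ, k < m x → iteratedDeriv k F x = 0) ∧
      Even (∑ x ∈ S, m x) := by
  have hFab : AnalyticOnNhd ℝ F (Icc a b) := hF.mono hIab
  have ha : a ∈ Icc a b := left_mem_Icc.2 hab.le
  set S := (hFab.finite_setOf_eq_zero isCompact_Icc isPreconnected_Icc ha hFa.ne').toFinset
  have hS : ∀ x, x ∈ S ↔ x ∈ Icc a b ∧ F x = 0 := fun x ↦ Set.Finite.mem_toFinset _
  have hS_Ioo : ∀ x ∈ S, x ∈ Ioo a b := fun x hx ↦ by
    obtain ⟨⟨hax, hxb⟩, hx⟩ := (hS x).1 hx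
    exact ⟨hax.lt_of_ne (by rintro rfl; linarith), hxb.lt_of_ne (by rintro rfl; linarith)⟩
  have hfinite : ∀ x ∈ Icc a b, analyticOrderAt F x ≠ ⊤ := fun x hx ↦
    hFab.analyticOrderAt_ne_top_of_isPreconnected isPreconnected_Icc ha hx
      (by simp [(hFab a ha).analyticOrderAt_eq_zero.2 hFa.ne'])
  have horder : ∀ x ∈ S, (∀ k < analyticOrderNatAt F x, iteratedDeriv k F x = 0) ∧
      iteratedDeriv (analyticOrderNatAt F x) F x ≠ 0 := fun x hx ↦
    (analyticOrderAt_eq_nat_iff_iteratedDeriv_eq_zero (hFab x ((hS x).1 hx).1)).1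
      (Nat.cast_analyticOrderNatAt (hfinite x ((hS x).1 hx).1)).symm
  refine ⟨S, analyticOrderNatAt F, hS_Ioo,
    fun x hx ↦ by rw [hS]; exact ⟨fun h ↦ ⟨Ioo_subset_Icc_self hx, h⟩, And.right⟩,
    fun x hx ↦ ⟨Nat.pos_of_ne_zero fun h ↦ ?_, (horder x hx).2, (horder x hx).1⟩, ?_⟩
  · have hx₀ := (horder x hx).2
    rw [h, iteratedDeriv_zero] at hx₀
    exact hx₀ ((hS x).1 hx).2
  · have hsign := sign_eq_neg_one_pow_sum_mul_sign S hab.le hFab.continuousOn hS_Ioo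
      (fun x hx h ↦ (hS x).2 ⟨hx, h⟩)
      (fun x hx ↦ (hFab x ((hS x).1 hx).1).exists_eventually_sign_eq (hfinite x ((hS x).1 hx).1))
    rw [sign_pos hFa, sign_pos hFb, mul_one, eq_comm] at hsign
    exact (neg_one_pow_eq_one_iff_even (by decide)).1 hsign

/-- If `F` is real-analytic on an open interval containing `[a,b]` with
`F(a) > 0` and `F(b) > 0`, then `F` has finitely many zeros in `(a,b)` and the
sum of their multiplicities is even. -/
theorem statement_18
    (a b : ℝ) (hab : a < b)
    (I : Set ℝ) (hI : IsOpen I) (hIab : Set.Icc a b ⊆ I)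
    (F : ℝ → ℝ) (hF : AnalyticOnNhd ℝ F I)
    (hFa : 0 < F a) (hFb : 0 < F b) :
    ∃ (S : Finset ℝ) (m : ℝ → ℕ),
      (∀ x ∈ S, x ∈ Set.Ioo a b) ∧
      (∀ x ∈ Set.Ioo a b, (F x = 0 ↔ x ∈ S)) ∧
      (∀ x ∈ S, 0 < m x ∧ iteratedDeriv (m x) F x ≠ 0 ∧
        ∀ k : ℕ, k < m x → iteratedDeriv k F x = 0) ∧
      Even (∑ x ∈ S, m x) :=
  statement_18_general a b hab I hIab F hF hFa hFb
end
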